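/- Let $p > 3$ be a prime, let $a, u$ be integers with $\gcd(a, p) = 1$ and $\gcd(u, p) = 1$, and let $c, v$ be integers with $a u^3 + 4 c u - 4 v \not\equiv 0 \pmod p$. Then there exist integers $x, y$ satisfying $y \equiv a x^3 + c x \pmod p$ and $y + v \equiv a (x+u)^3 + c (x+u) \pmod p$ if and only if $\big( \tfrac{-3}{p} \big) \big( \tfrac{a}{p} \big) \big( \tfrac{u}{p} \big) \big( \tfrac{a u^3 + 4 c u - 4 v}{p} \big) = 1$, where $\big( \tfrac{\cdot}{p} \big)$ denotes the Legendre symbol modulo $p$. -/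

import Mathlib

/-- Let p > 3 be prime, gcd(a, p) = gcd(u, p) = 1, and a u³ + 4cu - 4v ≢ 0 (mod p).
Then x, y exist with y ≡ a x³ + c x and y + v ≡ a(x+u)³ + c(x+u) (mod p) iff
(-3/p)(a/p)(u/p)((a u³ + 4cu - 4v)/p) = 1. -/
theorem cubic_two_points_iff_legendre
    (p : ℕ) [Fact p.Prime] (hp3 : 3 < p)
    (a u : ℤ) (ha : IsCoprime a (p : ℤ)) (hu : IsCoprime u (p : ℤ))
    (c v : ℤ) (hnz : ¬ Int.ModEq (p : ℤ) (a * u ^ 3 + 4 * c * u - 4 * v) 0) :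
    (∃ x y : ℤ,
        Int.ModEq (p : ℤ) y (a * x ^ 3 + c * x) ∧
        Int.ModEq (p : ℤ) (y + v) (a * (x + u) ^ 3 + c * (x + u))) ↔
      legendreSym p (-3) * legendreSym p a * legendreSym p u *
        legendreSym p (a * u ^ 3 + 4 * c * u - 4 * v) = 1 := by
  have hp : p.Prime := Fact.out
  set N : ℤ := a * u ^ 3 + 4 * c * u - 4 * v with hN
  -- nonvanishing facts in ZMod p
  have h3 : (3 : ZMod p) ≠ 0 := by
    have : ((3 : ℕ) : ZMod p) ≠ 0 := by
      rw [Ne, ZMod.natCast_eq_zero_iff]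
      intro h
      exact absurd (Nat.le_of_dvd (by norm_num) h) (by omega)
    simpa using this
  have h2 : (2 : ZMod p) ≠ 0 := by
    have : ((2 : ℕ) : ZMod p) ≠ 0 := by
      rw [Ne, ZMod.natCast_eq_zero_iff]
      intro h
      exact absurd (Nat.le_of_dvd (by norm_num) h) (by omega)
    simpa using this
  haveI : NeZero (2 : ZMod p) := ⟨h2⟩
  have hcop : ∀ w : ℤ, IsCoprime w (p : ℤ) → ((w : ZMod p) ≠ 0) := by
    intro w hw hw0
    rw [ZMod.intCast_zmod_eq_zero_iff_dvd] at hw0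
    have := Int.isCoprime_iff_gcd_eq_one.mp hw
    have hpd : (p : ℤ) ∣ Int.gcd w p := Int.dvd_coe_gcd hw0 dvd_rfl
    rw [this] at hpd
    have : (p : ℤ) ≤ 1 := Int.le_of_dvd one_pos hpd
    omega
  have ha0 : ((a : ZMod p) ≠ 0) := hcop a ha
  have hu0 : ((u : ZMod p) ≠ 0) := hcop u hu
  have hN0 : ((N : ZMod p) ≠ 0) := by
    intro h
    apply hnz
    have : ((N : ZMod p)) = ((0 : ℤ) : ZMod p) := by simpa using h
    exact (ZMod.intCast_eq_intCast_iff _ _ _).mp this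
  have hA : ((3 : ZMod p) * a * u) ≠ 0 := mul_ne_zero (mul_ne_zero h3 ha0) hu0
  -- Step 1: reduce to a quadratic over ZMod p
  have key : (∃ x y : ℤ,
        Int.ModEq (p : ℤ) y (a * x ^ 3 + c * x) ∧
        Int.ModEq (p : ℤ) (y + v) (a * (x + u) ^ 3 + c * (x + u))) ↔
      ∃ ξ : ZMod p, ((3 : ZMod p) * a * u) * (ξ * ξ) + ((3 : ZMod p) * a * u ^ 2) * ξ
        + ((a : ZMod p) * u ^ 3 + c * u - v) = 0 := by
    constructor
    · rintro ⟨x, y, h1, h2⟩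
      refine ⟨(x : ZMod p), ?_⟩
      have e1 : ((y : ZMod p)) = ((a * x ^ 3 + c * x : ℤ) : ZMod p) :=
        (ZMod.intCast_eq_intCast_iff _ _ _).mpr h1
      have e2 : ((y + v : ℤ) : ZMod p) = ((a * (x + u) ^ 3 + c * (x + u) : ℤ) : ZMod p) :=
        (ZMod.intCast_eq_intCast_iff _ _ _).mpr h2
      push_cast at e1 e2 ⊢
      linear_combination e1 - e2
    · rintro ⟨ξ, hξ⟩
      obtain ⟨x, hx⟩ := ZMod.intCast_surjective ξ
      refine ⟨x, a * x ^ 3 + c * x, Int.ModEq.refl _, ?_⟩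
      rw [← ZMod.intCast_eq_intCast_iff]
      rw [← hx] at hξ
      push_cast at hξ ⊢
      linear_combination -hξ
  rw [key]
  -- Step 2: solvability of the quadratic ↔ discriminant is a square
  have hdisc : discrim ((3 : ZMod p) * a * u) ((3 : ZMod p) * a * u ^ 2)
      ((a : ZMod p) * u ^ 3 + c * u - v) = (((-3 * a * u * N : ℤ)) : ZMod p) := by
    rw [discrim, hN]
    push_cast
    ring
  have step2 : (∃ ξ : ZMod p, ((3 : ZMod p) * a * u) * (ξ * ξ) + ((3 : ZMod p) * a * u ^ 2) * ξ
        + ((a : ZMod p) * u ^ 3 + c * u - v) = 0) ↔ IsSquare (((-3 * a * u * N : ℤ)) : ZMod p) := by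
    constructor
    · rintro ⟨ξ, hξ⟩
      rw [← hdisc]
      exact ⟨2 * ((3 : ZMod p) * a * u) * ξ + (3 : ZMod p) * a * u ^ 2, by
        rw [← sq]; exact discrim_eq_sq_of_quadratic_eq_zero hξ⟩
    · rintro ⟨s, hs⟩
      exact exists_quadratic_eq_zero hA ⟨s, by rw [hdisc]; exact hs⟩
  rw [step2]
  -- Step 3: relate to the Legendre symbol
  have hD0 : (((-3 * a * u * N : ℤ)) : ZMod p) ≠ 0 := by
    push_cast
    refine mul_ne_zero (mul_ne_zero (mul_ne_zero ?_ ha0) hu0) hN0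
    simpa using neg_ne_zero.mpr h3
  rw [← legendreSym.eq_one_iff p hD0]
  rw [show (-3 * a * u * N : ℤ) = (-3) * a * u * N by ring]
  rw [legendreSym.mul, legendreSym.mul, legendreSym.mul]
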